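/- Let G be a (k+1)-hypergraph of dimension d with α a vertex of G, and let S be an (m,a)-simple k-hypergraph of dimension d with 0 ≤ m ≤ k and a ∈ ℤ^d. Suppose α and α′ are two distinct data values not belonging to the vertex set of S, and S ∈ Σ_ℤ(Eqs({G↓α})). Then: (1) S↑α − S↑α′ is an (m+1, a)-simple (k+1)-hypergraph; (2) S↑α − S↑α′ ∈ Σ_ℤ(Eqs({G})). -/
import Mathlib


/-- A hypergraph (of dimension `d`) over the data domain `ℕ`, represented by its
weight function: a finitely supported function from finite sets of data values
(potential hyperedges) to weight vectors in `ℤ^d`.  Isolated vertices are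
irrelevant (hypergraphs are identified up to isolated vertices). -/
abbrev HG (d : ℕ) := (Finset ℕ) →₀ (Fin d → ℤ)

/-- `H` is a `k`-hypergraph: every hyperedge (set with nonzero weight) has `k` elements. -/
def IsHG (k : ℕ) {d : ℕ} (H : HG d) : Prop := ∀ e ∈ H.support, e.card = k

/-- The (non-isolated) vertices of `H`: the union of its hyperedges. -/
def verts {d : ℕ} (H : HG d) : Finset ℕ := H.support.sup id

/-- The weight `w_X(H)` of a finite set `X`: the sum of the weights of all
hyperedges of `H` that contain `X`. -/
def weight {d : ℕ} (X : Finset ℕ) (H : HG d) : Fin d → ℤ :=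
  ∑ e ∈ H.support.filter (fun e => X ⊆ e), H e
/-- Two hypergraphs are equivalent if (after discarding isolated vertices) they
differ by a permutation of the data domain. -/
def HGEquiv {d : ℕ} (H₁ H₂ : HG d) : Prop :=
  ∃ π : ℕ ≃ ℕ, ∀ e : Finset ℕ, H₂ (e.image π) = H₁ e

/-- All hypergraphs equivalent to a member of the family `𝒢`. -/
def Eqs {d : ℕ} (𝒢 : Set (HG d)) : Set (HG d) := {H | ∃ G ∈ 𝒢, HGEquiv G H}

/-- `Σ_ℤ(𝒢)`: all finite `ℤ`-linear combinations of members of `𝒢`. -/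
def Zsum {d : ℕ} (𝒢 : Set (HG d)) : Set (HG d) :=
  {H | ∃ (l : ℕ) (c : Fin l → ℤ) (F : Fin l → HG d),
      (∀ i, F i ∈ 𝒢) ∧ H = ∑ i, c i • F i}
/-- `G` is an `(m, a)`-simple `k`-hypergraph:
its vertex set is (contained in) a disjoint union `A ∪ B ∪ C` with
`A = {α₁, …, α_m}`, `B = {β₁, …, β_m}` and `|C| = 2(k−m) − 1`
(`C = ∅` when `m = k`), such that
`w_X(G) = (−1)^{|B ∩ X|} · a` for every `X = {x₁, …, x_m}` with
`x_i ∈ {α_i, β_i}` for each `i`, `w_X(G) = 0` for every other `m`-element set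
`X` of vertices, and `w_X(G) = 0` for every set `X` of vertices with
`|X| < m`. -/
def IsSimple {d : ℕ} (k m : ℕ) (a : Fin d → ℤ) (G : HG d) : Prop :=
  ∃ (A B C : Finset ℕ) (α β : Fin m → ℕ),
    Function.Injective α ∧ Function.Injective β ∧
    A = Finset.image α Finset.univ ∧ B = Finset.image β Finset.univ ∧
    Disjoint A B ∧ Disjoint A C ∧ Disjoint B C ∧
    C.card = 2 * (k - m) - 1 ∧
    verts G ⊆ A ∪ B ∪ C ∧
    (∀ χ : Fin m → Bool,
      weight (Finset.image (fun i => if χ i then β i else α i) Finset.univ) G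
        = ((-1 : ℤ) ^ (Finset.univ.filter (fun i => χ i = true)).card) • a) ∧
    (∀ X : Finset ℕ, X ⊆ A ∪ B ∪ C → X.card = m →
        (∀ χ : Fin m → Bool,
          X ≠ Finset.image (fun i => if χ i then β i else α i) Finset.univ) →
        weight X G = 0) ∧
    (∀ X : Finset ℕ, X ⊆ A ∪ B ∪ C → X.card < m → weight X G = 0)

/-- `S` is a simplification of the family `𝒢`: for every `0 ≤ m ≤ k` and every
vector `g` in the `ℤ`-span of the weights of `m`-element sets of vertices of
members of `𝒢`, the family `S` contains an `(m, g)`-simple `k`-hypergraph. -/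
def IsSimplificationOf {d : ℕ} (k : ℕ) (S 𝒢 : Set (HG d)) : Prop :=
  ∀ m : ℕ, m ≤ k →
    ∀ g ∈ Submodule.span ℤ
      {w : Fin d → ℤ | ∃ G ∈ 𝒢, ∃ X : Finset ℕ,
        X ⊆ verts G ∧ X.card = m ∧ w = weight X G},
      ∃ G' ∈ S, IsSimple k m g G'

/-- `S` is self-simplified: `S` is a simplification of `S` itself. -/
def SelfSimplified {d : ℕ} (k : ℕ) (S : Set (HG d)) : Prop :=
  IsSimplificationOf k S S

/-- `S` is simple for `𝒢`: `S` is self-simplified and a simplification of `𝒢`. -/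
def SimpleFor {d : ℕ} (k : ℕ) (S 𝒢 : Set (HG d)) : Prop :=
  SelfSimplified k S ∧ IsSimplificationOf k S 𝒢
/-- The `X`-cut `F↓X` of a `k`-hypergraph `F = (W, μ)` (for `X ⊆ W`,
`|X| < k`): the `(k−|X|)`-hypergraph on `W ∖ X` with weight function
`e ↦ μ(e ∪ X)`. -/
noncomputable def cut {d : ℕ} (X : Finset ℕ) (F : HG d) : HG d :=
  ∑ e ∈ F.support.filter (fun e => X ⊆ e), Finsupp.single (e \ X) (F e)
/-- Enriching `F` with `X` (for `X` disjoint from the vertex set of `F`):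
the minimal `(k+|X|)`-hypergraph `G` with `G↓X = F`; its weight function is
supported on the sets `e ∪ X` for hyperedges `e` of `F`, with weights
inherited from `F`. -/
noncomputable def enrich {d : ℕ} (X : Finset ℕ) (F : HG d) : HG d :=
  ∑ e ∈ F.support, Finsupp.single (e ∪ X) (F e)


open Finset

variable {d : ℕ}

lemma mem_verts {H : HG d} {x : ℕ} : x ∈ verts H ↔ ∃ e ∈ H.support, x ∈ e := by
  simp [verts, Finset.mem_sup]

lemma subset_verts {H : HG d} {e : Finset ℕ} (he : e ∈ H.support) : e ⊆ verts H :=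
  fun x hx => mem_verts.2 ⟨e, he, hx⟩

noncomputable def wHom (X : Finset ℕ) : HG d →+ (Fin d → ℤ) :=
  Finsupp.liftAddHom (fun e => if X ⊆ e then AddMonoidHom.id _ else 0)

lemma weight_eq_wHom (X : Finset ℕ) (H : HG d) : weight X H = wHom X H := by
  rw [weight, wHom, Finsupp.liftAddHom_apply, Finsupp.sum, ← Finset.sum_filter_add_sum_filter_not H.support (fun e => X ⊆ e)]
  have h1 : ∀ e ∈ H.support.filter (fun e => X ⊆ e),
      ((if X ⊆ e then AddMonoidHom.id (Fin d → ℤ) else 0) : _ →+ _) (H e) = H e := by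
    intro e he; rw [Finset.mem_filter] at he; rw [if_pos he.2]; rfl
  have h2 : ∀ e ∈ H.support.filter (fun e => ¬ X ⊆ e),
      ((if X ⊆ e then AddMonoidHom.id (Fin d → ℤ) else 0) : _ →+ _) (H e) = 0 := by
    intro e he; rw [Finset.mem_filter] at he; rw [if_neg he.2]; rfl
  rw [Finset.sum_congr rfl h1, Finset.sum_congr rfl h2, Finset.sum_const_zero, add_zero]

lemma weight_single (X e : Finset ℕ) (v : Fin d → ℤ) :
    weight X (Finsupp.single e v) = if X ⊆ e then v else 0 := by
  rw [weight_eq_wHom, wHom, Finsupp.liftAddHom_apply_single]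
  split <;> rfl

lemma weight_sub (X : Finset ℕ) (H₁ H₂ : HG d) :
    weight X (H₁ - H₂) = weight X H₁ - weight X H₂ := by
  simp [weight_eq_wHom]

lemma weight_zero_of (X : Finset ℕ) (H : HG d) {x : ℕ} (hx : x ∈ X) (hv : x ∉ verts H) :
    weight X H = 0 := by
  rw [weight]
  have : H.support.filter (fun e => X ⊆ e) = ∅ := by
    rw [Finset.filter_eq_empty_iff]
    intro e he hsub
    exact hv (subset_verts he (hsub hx))
  rw [this, Finset.sum_empty]

lemma weight_enrich (X : Finset ℕ) (γ : ℕ) (F : HG d) :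
    weight X (enrich {γ} F) = weight (X.erase γ) F := by
  rw [enrich, weight_eq_wHom, map_sum]
  have : ∀ e ∈ F.support, wHom X (Finsupp.single (e ∪ {γ}) (F e))
      = if X.erase γ ⊆ e then F e else 0 := by
    intro e _
    rw [← weight_eq_wHom, weight_single]
    congr 1
    have hins : e ∪ {γ} = insert γ e := by rw [Finset.union_comm]; rfl
    rw [hins, eq_iff_iff]
    constructor
    · intro h x hx
      rcases Finset.mem_erase.1 hx with ⟨hxγ, hxX⟩
      rcases Finset.mem_insert.1 (h hxX) with h' | h'
      · exact absurd h' hxγ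
      · exact h'
    · intro h x hx
      by_cases hxγ : x = γ
      · exact Finset.mem_insert.2 (Or.inl hxγ)
      · exact Finset.mem_insert.2 (Or.inr (h (Finset.mem_erase.2 ⟨hxγ, hx⟩)))
  rw [Finset.sum_congr rfl this, weight, Finset.sum_filter]

noncomputable def Em (γ : ℕ) : HG d →ₗ[ℤ] HG d :=
  Finsupp.lmapDomain (Fin d → ℤ) ℤ (fun e => e ∪ ({γ} : Finset ℕ))

noncomputable def Pm (π : ℕ ≃ ℕ) : HG d →ₗ[ℤ] HG d :=
  Finsupp.lmapDomain (Fin d → ℤ) ℤ (fun e => e.image π)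

lemma enrich_eq (γ : ℕ) (F : HG d) : enrich {γ} F = Em γ F := by
  rw [Em, Finsupp.lmapDomain_apply, Finsupp.mapDomain]; rfl

lemma Em_single (γ : ℕ) (e : Finset ℕ) (v : Fin d → ℤ) :
    Em (d := d) γ (Finsupp.single e v) = Finsupp.single (e ∪ {γ}) v := by
  rw [Em, Finsupp.lmapDomain_apply, Finsupp.mapDomain_single]

lemma Pm_single (π : ℕ ≃ ℕ) (e : Finset ℕ) (v : Fin d → ℤ) :
    Pm (d := d) π (Finsupp.single e v) = Finsupp.single (e.image π) v := by
  rw [Pm, Finsupp.lmapDomain_apply, Finsupp.mapDomain_single]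

lemma Pm_eq_sum (π : ℕ ≃ ℕ) (H : HG d) :
    Pm π H = ∑ e ∈ H.support, Finsupp.single (e.image π) (H e) := by
  rw [Pm, Finsupp.lmapDomain_apply, Finsupp.mapDomain]; rfl

lemma Pm_apply_image (π : ℕ ≃ ℕ) (H : HG d) (e : Finset ℕ) :
    Pm π H (e.image π) = H e :=
  Finsupp.mapDomain_apply (Finset.image_injective π.injective) H e

lemma image_symm_image (π : ℕ ≃ ℕ) (f : Finset ℕ) : (f.image π.symm).image π = f := by
  rw [Finset.image_image]; simp

lemma Pm_apply (π : ℕ ≃ ℕ) (H : HG d) (f : Finset ℕ) :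
    Pm π H f = H (f.image π.symm) := by
  conv_lhs => rw [← image_symm_image π f]
  rw [Pm_apply_image]

lemma Pm_comp (π ρ : ℕ ≃ ℕ) (H : HG d) :
    Pm ρ (Pm π H) = Pm (π.trans ρ) H := by
  rw [Pm, Pm, Pm, Finsupp.lmapDomain_apply, Finsupp.lmapDomain_apply, Finsupp.lmapDomain_apply]
  rw [← Finsupp.mapDomain_comp]
  congr 1
  funext e
  simp [Function.comp, Finset.image_image]

lemma cut_sum (α : ℕ) (G : HG d) :
    cut {α} G = ∑ e ∈ G.support.filter (fun e => α ∈ e), Finsupp.single (e \ {α}) (G e) := by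
  rw [cut]
  congr 1
  apply Finset.filter_congr
  intro e _
  simp [Finset.singleton_subset_iff]

lemma enrich_apply {F : HG d} {γ : ℕ} (hγ : γ ∉ verts F) (f : Finset ℕ) :
    enrich {γ} F f = if γ ∈ f then F (f.erase γ) else 0 := by
  have hγe : ∀ e ∈ F.support, e ∪ {γ} = insert γ e := by
    intro e _; rw [Finset.union_comm]; rfl
  rw [enrich, Finset.sum_apply']
  by_cases hf : γ ∈ f
  · rw [if_pos hf]
    rw [Finset.sum_eq_single (f.erase γ)]
    · rw [Finsupp.single_apply]
      have : f.erase γ ∪ {γ} = f := by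
        rw [Finset.union_comm]
        show insert γ (f.erase γ) = f
        exact Finset.insert_erase hf
      rw [if_pos this]
    · intro e he hne
      rw [Finsupp.single_apply, if_neg]
      intro h
      apply hne
      have hγnotine : γ ∉ e := fun h' => hγ (subset_verts he h')
      rw [hγe e he] at h
      rw [← h, Finset.erase_insert hγnotine]
    · intro h
      rw [Finsupp.notMem_support_iff.1 h, Finsupp.single_zero, Finsupp.coe_zero, Pi.zero_apply]
  · rw [if_neg hf]
    apply Finset.sum_eq_zero
    intro e he
    rw [Finsupp.single_apply, if_neg]
    intro h
    apply hf
    rw [← h, hγe e he]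
    exact Finset.mem_insert_self γ e


lemma eqs_elim {G F : HG d} (h : HGEquiv G F) : ∃ π : ℕ ≃ ℕ, F = Pm π G := by
  obtain ⟨π, hπ⟩ := h
  refine ⟨π, ?_⟩
  ext f
  rw [Pm_apply, ← hπ (f.image π.symm), image_symm_image]

lemma eqs_intro (π : ℕ ≃ ℕ) (G : HG d) : Pm π G ∈ Eqs {G} :=
  ⟨G, rfl, π, fun e => Pm_apply_image π G e⟩

lemma zsum_iff {𝒢 : Set (HG d)} {H : HG d} :
    H ∈ Zsum 𝒢 ↔ H ∈ Submodule.span ℤ 𝒢 := by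
  constructor
  · rintro ⟨l, c, F, hF, rfl⟩
    exact Submodule.sum_mem _ fun i _ =>
      Submodule.smul_mem _ _ (Submodule.subset_span (hF i))
  · intro h
    rw [Submodule.mem_span_set] at h
    obtain ⟨c, hsupp, rfl⟩ := h
    refine ⟨c.support.card, fun i => c (c.support.equivFin.symm i),
      fun i => (c.support.equivFin.symm i : HG d),
      fun i => hsupp (c.support.equivFin.symm i).2, ?_⟩
    rw [Finsupp.sum, ← Finset.sum_coe_sort c.support (fun x => c x • x)]
    exact Fintype.sum_equiv c.support.equivFin (fun x => c x • (x : HG d))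
      (fun i => c (c.support.equivFin.symm i) • ((c.support.equivFin.symm i : c.support) : HG d))
      (fun x => by simp only [Equiv.symm_apply_apply])

-- key lemma
lemma key (G : HG d) (α : ℕ) (π : ℕ ≃ ℕ) (β : ℕ)
    (hβ : ∀ x ∈ verts G, π x ≠ β) :
    Pm (π.trans (Equiv.swap (π α) β)) G
      = Em β (Pm π (cut {α} G))
        + ∑ e ∈ G.support.filter (fun e => α ∉ e), Finsupp.single (e.image π) (G e) := by
  set τ := π.trans (Equiv.swap (π α) β) with hτdef
  have hτ : ∀ x ∈ verts G, x ≠ α → τ x = π x := by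
    intro x hx hxα
    show Equiv.swap (π α) β (π x) = π x
    exact Equiv.swap_apply_of_ne_of_ne (fun h => hxα (π.injective h)) (hβ x hx)
  have hτα : τ α = β := by
    show Equiv.swap (π α) β (π α) = β
    exact Equiv.swap_apply_left _ _
  have himg1 : ∀ e ∈ G.support, α ∈ e → e.image τ = (e \ {α}).image π ∪ {β} := by
    intro e he hαe
    have herase : e \ {α} = e.erase α := (Finset.erase_eq e α).symm
    rw [herase]
    have : e = insert α (e.erase α) := (Finset.insert_erase hαe).symm
    conv_lhs => rw [this]
    rw [Finset.image_insert, hτα]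
    have : (e.erase α).image τ = (e.erase α).image π := by
      apply Finset.image_congr
      intro x hx
      rcases Finset.mem_erase.1 hx with ⟨hxα, hxe⟩
      exact hτ x (subset_verts he hxe) hxα
    rw [this, Finset.union_comm]
    rfl
  have himg2 : ∀ e ∈ G.support, α ∉ e → e.image τ = e.image π := by
    intro e he hαe
    apply Finset.image_congr
    intro x hx
    exact hτ x (subset_verts he hx) (fun h => hαe (h ▸ hx))
  rw [Pm_eq_sum]
  rw [← Finset.sum_filter_add_sum_filter_not G.support (fun e => α ∈ e)
    (fun e => Finsupp.single (e.image τ) (G e))]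
  congr 1
  · rw [cut_sum, map_sum, map_sum]
    apply Finset.sum_congr rfl
    intro e he
    rw [Finset.mem_filter] at he
    rw [Pm_single, Em_single, himg1 e he.1 he.2]
  · apply Finset.sum_congr rfl
    intro e he
    rw [Finset.mem_filter] at he
    rw [himg2 e he.1 he.2]

lemma enrich_diff (G : HG d) (α : ℕ) (π : ℕ ≃ ℕ) (β β' : ℕ)
    (hβ : ∀ x ∈ verts G, π x ≠ β) (hβ' : ∀ x ∈ verts G, π x ≠ β') :
    enrich {β} (Pm π (cut {α} G)) - enrich {β'} (Pm π (cut {α} G))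
      = Pm (π.trans (Equiv.swap (π α) β)) G - Pm (π.trans (Equiv.swap (π α) β')) G := by
  rw [enrich_eq, enrich_eq, key G α π β hβ, key G α π β' hβ']
  abel

lemma image_snoc_univ {m : ℕ} (f : Fin m → ℕ) (y : ℕ) :
    Finset.image (Fin.snoc f y) Finset.univ = insert y (Finset.image f Finset.univ) := by
  ext x
  simp only [Finset.mem_image, Finset.mem_insert, Finset.mem_univ, true_and]
  constructor
  · rintro ⟨i, rfl⟩
    rcases Fin.eq_castSucc_or_eq_last i with ⟨j, rfl⟩ | rfl
    · right; exact ⟨j, by simp⟩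
    · left; simp
  · rintro (rfl | ⟨j, rfl⟩)
    · exact ⟨Fin.last m, by simp⟩
    · exact ⟨j.castSucc, by simp⟩

lemma snoc_injective {m : ℕ} {f : Fin m → ℕ} (hf : Function.Injective f) {y : ℕ}
    (hy : ∀ i, f i ≠ y) : Function.Injective (Fin.snoc f y) := by
  intro i j hij
  rcases Fin.eq_castSucc_or_eq_last i with ⟨i', rfl⟩ | rfl <;>
    rcases Fin.eq_castSucc_or_eq_last j with ⟨j', rfl⟩ | rfl <;>
      simp only [Fin.snoc_castSucc, Fin.snoc_last] at hij
  · rw [hf hij]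
  · exact absurd hij (hy i')
  · exact absurd hij.symm (hy j')
  · rfl

lemma perm_fix_outside {S : HG d} {π : ℕ ≃ ℕ} (hπ : ∀ x ∈ verts S, π x = x)
    {x : ℕ} (hx : x ∉ verts S) : π x ∉ verts S := by
  intro h
  have h2 : π (π x) = π x := hπ _ h
  exact hx (π.injective h2 ▸ h)

lemma weight_image_perm {S : HG d} {π : ℕ ≃ ℕ} (hπ : ∀ x ∈ verts S, π x = x)
    (X : Finset ℕ) : weight (X.image π) S = weight X S := by
  by_cases hX : ∀ x ∈ X, x ∈ verts S
  · have : X.image π = X := by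
      rw [Finset.image_congr (g := id) (fun x hx => hπ x (hX x hx)), Finset.image_id]
    rw [this]
  · push_neg at hX
    obtain ⟨x, hxX, hxv⟩ := hX
    rw [weight_zero_of X S hxX hxv, weight_zero_of (X.image π) S
      (Finset.mem_image_of_mem π hxX) (perm_fix_outside hπ hxv)]

/-- Pattern set commutes with permutation. -/
lemma pattern_image (π : ℕ ≃ ℕ) {m : ℕ} (αf βf : Fin m → ℕ) (χ : Fin m → Bool) :
    (Finset.image (fun i => if χ i then βf i else αf i) Finset.univ).image π
      = Finset.image (fun i => if χ i then π (βf i) else π (αf i)) Finset.univ := by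
  rw [Finset.image_image]
  apply Finset.image_congr
  intro i _
  simp only [Function.comp_apply]
  split <;> rfl

lemma isSimple_clean {k m : ℕ} {a : Fin d → ℤ} {S : HG d} (hs : IsSimple k m a S)
    (α α' : ℕ) (hα : α ∉ verts S) (hα' : α' ∉ verts S) (hne : α ≠ α') :
    ∃ (A B C : Finset ℕ) (αf βf : Fin m → ℕ),
      Function.Injective αf ∧ Function.Injective βf ∧
      A = Finset.image αf Finset.univ ∧ B = Finset.image βf Finset.univ ∧
      Disjoint A B ∧ Disjoint A C ∧ Disjoint B C ∧
      C.card = 2 * (k - m) - 1 ∧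
      verts S ⊆ A ∪ B ∪ C ∧
      (∀ χ : Fin m → Bool,
        weight (Finset.image (fun i => if χ i then βf i else αf i) Finset.univ) S
          = ((-1 : ℤ) ^ (Finset.univ.filter (fun i => χ i = true)).card) • a) ∧
      (∀ X : Finset ℕ, X ⊆ A ∪ B ∪ C → X.card = m →
          (∀ χ : Fin m → Bool,
            X ≠ Finset.image (fun i => if χ i then βf i else αf i) Finset.univ) →
          weight X S = 0) ∧
      (∀ X : Finset ℕ, X ⊆ A ∪ B ∪ C → X.card < m → weight X S = 0) ∧
      α ∉ A ∪ B ∪ C ∧ α' ∉ A ∪ B ∪ C := by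
  obtain ⟨A, B, C, αf, βf, hαinj, hβinj, hA, hB, hAB, hAC, hBC, hC, hverts, hχ, hother, hlow⟩ := hs
  set T : Finset ℕ := (A ∪ B ∪ C) ∪ verts S ∪ {α, α'} with hT
  obtain ⟨γ, hγ⟩ := Infinite.exists_notMem_finset T
  obtain ⟨γ', hγ'⟩ := Infinite.exists_notMem_finset (insert γ T)
  have hγ'T : γ' ∉ T := fun h => hγ' (Finset.mem_insert_of_mem h)
  have hγγ' : γ ≠ γ' := fun h => hγ' (h ▸ Finset.mem_insert_self γ T)
  -- basic non-membership facts
  have hαT : ∀ x, x ∉ T → x ≠ α ∧ x ≠ α' ∧ x ∉ verts S ∧ x ∉ A ∪ B ∪ C := by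
    intro x hx
    refine ⟨?_, ?_, ?_, ?_⟩ <;> intro h <;> apply hx <;> rw [hT]
    · subst h; exact Finset.mem_union_right _ (by simp)
    · subst h; exact Finset.mem_union_right _ (by simp)
    · exact Finset.mem_union_left _ (Finset.mem_union_right _ h)
    · exact Finset.mem_union_left _ (Finset.mem_union_left _ h)
  obtain ⟨hγα, hγα', hγv, hγU⟩ := hαT γ hγ
  obtain ⟨hγ'α, hγ'α', hγ'v, hγ'U⟩ := hαT γ' hγ'T
  set π : ℕ ≃ ℕ := (Equiv.swap α γ).trans (Equiv.swap α' γ') with hπdef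
  have hπα : π α = γ := by
    show Equiv.swap α' γ' (Equiv.swap α γ α) = γ
    rw [Equiv.swap_apply_left]
    exact Equiv.swap_apply_of_ne_of_ne hγα' hγγ'
  have hπγ : π γ = α := by
    show Equiv.swap α' γ' (Equiv.swap α γ γ) = α
    rw [Equiv.swap_apply_right]
    exact Equiv.swap_apply_of_ne_of_ne hne (fun h => hγ'α h.symm)
  have hπα' : π α' = γ' := by
    show Equiv.swap α' γ' (Equiv.swap α γ α') = γ'
    rw [Equiv.swap_apply_of_ne_of_ne (Ne.symm hne) (fun h => hγα' h.symm)]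
    exact Equiv.swap_apply_left _ _
  have hπγ' : π γ' = α' := by
    show Equiv.swap α' γ' (Equiv.swap α γ γ') = α'
    rw [Equiv.swap_apply_of_ne_of_ne hγ'α (fun h => hγγ' h.symm)]
    exact Equiv.swap_apply_right _ _
  have hπfix : ∀ x ∈ verts S, π x = x := by
    intro x hx
    show Equiv.swap α' γ' (Equiv.swap α γ x) = x
    rw [Equiv.swap_apply_of_ne_of_ne (ne_of_mem_of_not_mem hx hα)
      (ne_of_mem_of_not_mem hx hγv)]
    exact Equiv.swap_apply_of_ne_of_ne (ne_of_mem_of_not_mem hx hα')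
      (ne_of_mem_of_not_mem hx hγ'v)
  have hwt := weight_image_perm hπfix
  refine ⟨A.image π, B.image π, C.image π, π ∘ αf, π ∘ βf,
    π.injective.comp hαinj, π.injective.comp hβinj, ?_, ?_, ?_, ?_, ?_, ?_, ?_, ?_, ?_, ?_, ?_, ?_⟩
  · rw [hA, Finset.image_image]
  · rw [hB, Finset.image_image]
  · exact (Finset.disjoint_image π.injective).2 hAB
  · exact (Finset.disjoint_image π.injective).2 hAC
  · exact (Finset.disjoint_image π.injective).2 hBC
  · rw [Finset.card_image_of_injective _ π.injective]; exact hC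
  · intro x hx
    have : x ∈ A ∪ B ∪ C := hverts hx
    rw [← Finset.image_union, ← Finset.image_union]
    rw [← hπfix x hx]
    exact Finset.mem_image_of_mem π this
  · intro χ
    have h1 : (Finset.image (fun i => if χ i then (π ∘ βf) i else (π ∘ αf) i) Finset.univ)
        = (Finset.image (fun i => if χ i then βf i else αf i) Finset.univ).image π := by
      rw [pattern_image]; rfl
    rw [h1, hwt]
    exact hχ χ
  · intro X hX hcard hpat
    have hXY : X = (X.image π.symm).image π := (image_symm_image π X).symm
    have hY : X.image π.symm ⊆ A ∪ B ∪ C := by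
      intro y hy
      rw [Finset.mem_image] at hy
      obtain ⟨x, hx, rfl⟩ := hy
      have := hX hx
      rw [← Finset.image_union, ← Finset.image_union, Finset.mem_image] at this
      obtain ⟨z, hz, hzx⟩ := this
      rwa [← hzx, Equiv.symm_apply_apply]
    have hYcard : (X.image π.symm).card = m := by
      rw [Finset.card_image_of_injective _ π.symm.injective]; exact hcard
    have hYpat : ∀ χ : Fin m → Bool,
        X.image π.symm ≠ Finset.image (fun i => if χ i then βf i else αf i) Finset.univ := by
      intro χ h
      apply hpat χ
      rw [hXY, h, pattern_image]
      rfl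
    rw [hXY, hwt]
    exact hother _ hY hYcard hYpat
  · intro X hX hcard
    have hXY : X = (X.image π.symm).image π := (image_symm_image π X).symm
    have hY : X.image π.symm ⊆ A ∪ B ∪ C := by
      intro y hy
      rw [Finset.mem_image] at hy
      obtain ⟨x, hx, rfl⟩ := hy
      have := hX hx
      rw [← Finset.image_union, ← Finset.image_union, Finset.mem_image] at this
      obtain ⟨z, hz, hzx⟩ := this
      rwa [← hzx, Equiv.symm_apply_apply]
    have hYcard : (X.image π.symm).card < m := by
      rw [Finset.card_image_of_injective _ π.symm.injective]; exact hcard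
    rw [hXY, hwt]
    exact hlow _ hY hYcard
  · intro h
    rw [← Finset.image_union, ← Finset.image_union, Finset.mem_image] at h
    obtain ⟨z, hz, hzα⟩ := h
    have : z = γ := by
      have := π.injective (hzα.trans hπγ.symm)
      exact this
    exact hγU (this ▸ hz)
  · intro h
    rw [← Finset.image_union, ← Finset.image_union, Finset.mem_image] at h
    obtain ⟨z, hz, hzα⟩ := h
    have : z = γ' := π.injective (hzα.trans hπγ'.symm)
    exact hγ'U (this ▸ hz)

lemma pattern_snoc {m : ℕ} (αf βf : Fin m → ℕ) (x y : ℕ) (χ : Fin (m+1) → Bool) :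
    Finset.image (fun i => if χ i then Fin.snoc βf y i else Fin.snoc αf x i) Finset.univ
      = insert (if χ (Fin.last m) then y else x)
          (Finset.image (fun j : Fin m => if χ j.castSucc then βf j else αf j) Finset.univ) := by
  have h : (fun i => if χ i then Fin.snoc (α := fun _ => ℕ) βf y i
        else Fin.snoc (α := fun _ => ℕ) αf x i)
      = (Fin.snoc (α := fun _ => ℕ) (fun j => if χ j.castSucc then βf j else αf j)
          (if χ (Fin.last m) then y else x)) := by
    funext i
    rcases Fin.eq_castSucc_or_eq_last i with ⟨j, rfl⟩ | rfl
    · by_cases h' : χ j.castSucc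
      · rw [if_pos h', Fin.snoc_castSucc, Fin.snoc_castSucc, if_pos h']
      · rw [if_neg h', Fin.snoc_castSucc, Fin.snoc_castSucc, if_neg h']
    · rw [Fin.snoc_last, Fin.snoc_last, Fin.snoc_last]
  rw [h, image_snoc_univ]

lemma count_snoc {m : ℕ} (χ : Fin (m+1) → Bool) :
    (Finset.univ.filter (fun i => χ i = true)).card
      = (Finset.univ.filter (fun j : Fin m => χ j.castSucc = true)).card
        + (if χ (Fin.last m) then 1 else 0) := by
  rw [Finset.card_filter, Finset.card_filter, Fin.sum_univ_castSucc]

lemma raise_simple {k m : ℕ} {a : Fin d → ℤ} {S : HG d}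
    (hs : IsSimple k m a S) (α α' : ℕ)
    (hα : α ∉ verts S) (hα' : α' ∉ verts S) (hne : α ≠ α') :
    IsSimple (k+1) (m+1) a (enrich {α} S - enrich {α'} S) := by
  obtain ⟨A, B, C, αf, βf, hαinj, hβinj, hA, hB, hAB, hAC, hBC, hC, hverts, hχ, hother, hlow,
    hαU, hα'U⟩ := isSimple_clean hs α α' hα hα' hne
  have hwD : ∀ X : Finset ℕ,
      weight X (enrich {α} S - enrich {α'} S) = weight (X.erase α) S - weight (X.erase α') S := by
    intro X; rw [weight_sub, weight_enrich, weight_enrich]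
  have hmemU : ∀ x : ℕ, x ∈ A ∪ B ∪ C ↔ (x ∈ A ∨ x ∈ B ∨ x ∈ C) := by
    intro x; simp [Finset.mem_union, or_assoc]
  have hαA : α ∉ A := fun h => hαU ((hmemU α).2 (Or.inl h))
  have hαB : α ∉ B := fun h => hαU ((hmemU α).2 (Or.inr (Or.inl h)))
  have hαC : α ∉ C := fun h => hαU ((hmemU α).2 (Or.inr (Or.inr h)))
  have hα'A : α' ∉ A := fun h => hα'U ((hmemU α').2 (Or.inl h))
  have hα'B : α' ∉ B := fun h => hα'U ((hmemU α').2 (Or.inr (Or.inl h)))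
  have hα'C : α' ∉ C := fun h => hα'U ((hmemU α').2 (Or.inr (Or.inr h)))
  have hmemU' : ∀ x : ℕ, x ∈ insert α A ∪ insert α' B ∪ C ↔
      (x = α ∨ x = α' ∨ x ∈ A ∪ B ∪ C) := by
    intro x
    simp only [Finset.mem_union, Finset.mem_insert]
    tauto
  refine ⟨insert α A, insert α' B, C, Fin.snoc αf α, Fin.snoc βf α', ?_, ?_, ?_, ?_, ?_, ?_, ?_,
    ?_, ?_, ?_, ?_, ?_⟩
  · exact snoc_injective hαinj (fun i h => hαA (hA ▸ Finset.mem_image.2 ⟨i, Finset.mem_univ i, h⟩))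
  · exact snoc_injective hβinj (fun i h => hα'B (hB ▸ Finset.mem_image.2 ⟨i, Finset.mem_univ i, h⟩))
  · rw [image_snoc_univ, hA]
  · rw [image_snoc_univ, hB]
  · rw [Finset.disjoint_left]
    intro x hx hx'
    rcases Finset.mem_insert.1 hx with rfl | hxA
    · rcases Finset.mem_insert.1 hx' with h | h
      · exact hne h
      · exact hαB h
    · rcases Finset.mem_insert.1 hx' with rfl | h
      · exact hα'A hxA
      · exact Finset.disjoint_left.1 hAB hxA h
  · rw [Finset.disjoint_left]
    intro x hx hx'
    rcases Finset.mem_insert.1 hx with rfl | hxA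
    · exact hαC hx'
    · exact Finset.disjoint_left.1 hAC hxA hx'
  · rw [Finset.disjoint_left]
    intro x hx hx'
    rcases Finset.mem_insert.1 hx with rfl | hxB
    · exact hα'C hx'
    · exact Finset.disjoint_left.1 hBC hxB hx'
  · rw [Nat.succ_sub_succ]; exact hC
  · -- verts D ⊆ ...
    intro x hx
    obtain ⟨e, he, hxe⟩ := mem_verts.1 hx
    have hsupp := Finsupp.support_sub he
    have hxmem : x = α ∨ x = α' ∨ x ∈ verts S := by
      rcases Finset.mem_union.1 hsupp with h | h <;> rw [Finsupp.mem_support_iff] at h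
      · rw [enrich_apply hα] at h
        by_cases hαe : α ∈ e
        · rw [if_pos hαe] at h
          by_cases hxα : x = α
          · exact Or.inl hxα
          · refine Or.inr (Or.inr ?_)
            exact subset_verts (Finsupp.mem_support_iff.2 h) (Finset.mem_erase.2 ⟨hxα, hxe⟩)
        · rw [if_neg hαe] at h; exact absurd rfl h
      · rw [enrich_apply hα'] at h
        by_cases hαe : α' ∈ e
        · rw [if_pos hαe] at h
          by_cases hxα : x = α'
          · exact Or.inr (Or.inl hxα)
          · refine Or.inr (Or.inr ?_)
            exact subset_verts (Finsupp.mem_support_iff.2 h) (Finset.mem_erase.2 ⟨hxα, hxe⟩)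
        · rw [if_neg hαe] at h; exact absurd rfl h
    rw [hmemU']
    rcases hxmem with h | h | h
    · exact Or.inl h
    · exact Or.inr (Or.inl h)
    · exact Or.inr (Or.inr (hverts h))
  · -- χ condition
    intro χ
    have hXeq := pattern_snoc αf βf α α' χ
    have hX₀sub : (Finset.image (fun j : Fin m => if χ j.castSucc then βf j else αf j)
        Finset.univ) ⊆ A ∪ B := by
      intro x hx
      obtain ⟨j, _, rfl⟩ := Finset.mem_image.1 hx
      by_cases h : χ j.castSucc
      · rw [if_pos h]
        exact Finset.mem_union_right _ (hB ▸ Finset.mem_image.2 ⟨j, Finset.mem_univ j, rfl⟩)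
      · rw [if_neg h]
        exact Finset.mem_union_left _ (hA ▸ Finset.mem_image.2 ⟨j, Finset.mem_univ j, rfl⟩)
    have hαX₀ : α ∉ (Finset.image (fun j : Fin m => if χ j.castSucc then βf j else αf j)
        Finset.univ) := fun h => hαU (Finset.mem_union_left _ (hX₀sub h))
    have hα'X₀ : α' ∉ (Finset.image (fun j : Fin m => if χ j.castSucc then βf j else αf j)
        Finset.univ) := fun h => hα'U (Finset.mem_union_left _ (hX₀sub h))
    rw [hXeq, hwD, count_snoc]
    by_cases h : χ (Fin.last m)
    · rw [if_pos h, if_pos h]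
      have h1 : (insert α' (Finset.image (fun j : Fin m => if χ j.castSucc then βf j else αf j)
          Finset.univ)).erase α = insert α' (Finset.image
          (fun j : Fin m => if χ j.castSucc then βf j else αf j) Finset.univ) := by
        apply Finset.erase_eq_of_notMem
        rw [Finset.mem_insert]
        rintro (h' | h')
        · exact hne h'
        · exact hαX₀ h'
      have h2 : (insert α' (Finset.image (fun j : Fin m => if χ j.castSucc then βf j else αf j)
          Finset.univ)).erase α' = Finset.image
          (fun j : Fin m => if χ j.castSucc then βf j else αf j) Finset.univ :=
        Finset.erase_insert hα'X₀
      rw [h1, h2, hχ, weight_zero_of _ S (Finset.mem_insert_self α' _) hα']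
      rw [pow_succ, mul_neg_one, neg_smul, zero_sub]
    · rw [if_neg h, if_neg h]
      have h1 : (insert α (Finset.image (fun j : Fin m => if χ j.castSucc then βf j else αf j)
          Finset.univ)).erase α = Finset.image
          (fun j : Fin m => if χ j.castSucc then βf j else αf j) Finset.univ :=
        Finset.erase_insert hαX₀
      have h2 : (insert α (Finset.image (fun j : Fin m => if χ j.castSucc then βf j else αf j)
          Finset.univ)).erase α' = insert α (Finset.image
          (fun j : Fin m => if χ j.castSucc then βf j else αf j) Finset.univ) := by
        apply Finset.erase_eq_of_notMem
        rw [Finset.mem_insert]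
        rintro (h' | h')
        · exact hne h'.symm
        · exact hα'X₀ h'
      rw [h1, h2, hχ, weight_zero_of _ S (Finset.mem_insert_self α _) hα]
      rw [add_zero, sub_zero]
  · -- other condition
    intro X hXsub hXcard hXpat
    rw [hwD]
    by_cases hαX : α ∈ X <;> by_cases hα'X : α' ∈ X
    · rw [weight_zero_of _ S (Finset.mem_erase.2 ⟨Ne.symm hne, hα'X⟩) hα',
        weight_zero_of _ S (Finset.mem_erase.2 ⟨hne, hαX⟩) hα, sub_zero]
    · rw [Finset.erase_eq_of_notMem hα'X, weight_zero_of X S hαX hα]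
      have hY : X.erase α ⊆ A ∪ B ∪ C := by
        intro x hx
        rcases Finset.mem_erase.1 hx with ⟨hxα, hxX⟩
        rcases (hmemU' x).1 (hXsub hxX) with rfl | rfl | h
        · exact absurd rfl hxα
        · exact absurd hxX hα'X
        · exact h
      have hYcard : (X.erase α).card = m := by
        have := Finset.card_erase_add_one hαX; omega
      have hYpat : ∀ χ₀ : Fin m → Bool,
          X.erase α ≠ Finset.image (fun j => if χ₀ j then βf j else αf j) Finset.univ := by
        intro χ₀ heq
        apply hXpat (Fin.snoc χ₀ false)
        rw [pattern_snoc]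
        simp only [Fin.snoc_last, Fin.snoc_castSucc, Bool.false_eq_true, if_false]
        rw [← heq, Finset.insert_erase hαX]
      rw [hother _ hY hYcard hYpat, sub_zero]
    · rw [Finset.erase_eq_of_notMem hαX, weight_zero_of X S hα'X hα']
      have hY : X.erase α' ⊆ A ∪ B ∪ C := by
        intro x hx
        rcases Finset.mem_erase.1 hx with ⟨hxα, hxX⟩
        rcases (hmemU' x).1 (hXsub hxX) with rfl | rfl | h
        · exact absurd hxX hαX
        · exact absurd rfl hxα
        · exact h
      have hYcard : (X.erase α').card = m := by
        have := Finset.card_erase_add_one hα'X; omega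
      have hYpat : ∀ χ₀ : Fin m → Bool,
          X.erase α' ≠ Finset.image (fun j => if χ₀ j then βf j else αf j) Finset.univ := by
        intro χ₀ heq
        apply hXpat (Fin.snoc χ₀ true)
        rw [pattern_snoc]
        simp only [Fin.snoc_last, Fin.snoc_castSucc, if_true]
        rw [← heq, Finset.insert_erase hα'X]
      rw [hother _ hY hYcard hYpat, zero_sub, neg_zero]
    · rw [Finset.erase_eq_of_notMem hαX, Finset.erase_eq_of_notMem hα'X, sub_self]
  · -- low condition
    intro X hXsub hXcard
    rw [hwD]
    by_cases hαX : α ∈ X <;> by_cases hα'X : α' ∈ X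
    · rw [weight_zero_of _ S (Finset.mem_erase.2 ⟨Ne.symm hne, hα'X⟩) hα',
        weight_zero_of _ S (Finset.mem_erase.2 ⟨hne, hαX⟩) hα, sub_zero]
    · rw [Finset.erase_eq_of_notMem hα'X, weight_zero_of X S hαX hα]
      have hY : X.erase α ⊆ A ∪ B ∪ C := by
        intro x hx
        rcases Finset.mem_erase.1 hx with ⟨hxα, hxX⟩
        rcases (hmemU' x).1 (hXsub hxX) with rfl | rfl | h
        · exact absurd rfl hxα
        · exact absurd hxX hα'X
        · exact h
      have hYcard : (X.erase α).card < m := by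
        have := Finset.card_erase_add_one hαX; omega
      rw [hlow _ hY hYcard, sub_zero]
    · rw [Finset.erase_eq_of_notMem hαX, weight_zero_of X S hα'X hα']
      have hY : X.erase α' ⊆ A ∪ B ∪ C := by
        intro x hx
        rcases Finset.mem_erase.1 hx with ⟨hxα, hxX⟩
        rcases (hmemU' x).1 (hXsub hxX) with rfl | rfl | h
        · exact absurd hxX hαX
        · exact absurd rfl hxα
        · exact h
      have hYcard : (X.erase α').card < m := by
        have := Finset.card_erase_add_one hα'X; omega
      rw [hlow _ hY hYcard, zero_sub, neg_zero]
    · rw [Finset.erase_eq_of_notMem hαX, Finset.erase_eq_of_notMem hα'X, sub_self]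


/-- **Lemma (raising simple hypergraphs).**
Let `G` be a `(k+1)`-hypergraph of dimension `d` with `α` a vertex of `G`, and
let `S` be an `(m, a)`-simple `k`-hypergraph of dimension `d` with
`0 ≤ m ≤ k` and `a ∈ ℤ^d`.  Suppose `α` and `α'` are two distinct data values
not belonging to the vertex set of `S`, and `S ∈ Σ_ℤ(Eqs({G↓α}))`.  Then
`S↑α − S↑α'` is an `(m+1, a)`-simple `(k+1)`-hypergraph and
`S↑α − S↑α' ∈ Σ_ℤ(Eqs({G}))`. -/
theorem simple_hypergraph_raising
    (k d m : ℕ) (hk : 1 ≤ k) (hd : 1 ≤ d) (hm : m ≤ k)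
    (G : HG d) (hG : IsHG (k + 1) G)
    (α α' : ℕ) (hαG : α ∈ verts G) (hne : α ≠ α')
    (a : Fin d → ℤ) (S : HG d) (hSk : IsHG k S) (hSsimple : IsSimple k m a S)
    (hα : α ∉ verts S) (hα' : α' ∉ verts S)
    (hmem : S ∈ Zsum (Eqs {cut {α} G})) :
    IsHG (k + 1) (enrich {α} S - enrich {α'} S) ∧
    IsSimple (k + 1) (m + 1) a (enrich {α} S - enrich {α'} S) ∧
    (enrich {α} S - enrich {α'} S) ∈ Zsum (Eqs {G}) := by
  refine ⟨?_, raise_simple hSsimple α α' hα hα' hne, ?_⟩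
  · -- IsHG (k+1)
    intro e he
    rw [Finsupp.mem_support_iff, Finsupp.sub_apply, enrich_apply hα, enrich_apply hα'] at he
    have hcard : ∀ γ : ℕ, γ ∈ e → S (e.erase γ) ≠ 0 → e.card = k + 1 := by
      intro γ hγe hS0
      have h1 := hSk _ (Finsupp.mem_support_iff.2 hS0)
      have h2 := Finset.card_erase_add_one hγe
      omega
    by_cases h1 : (if α ∈ e then S (e.erase α) else 0) = 0
    · have h2 : (if α' ∈ e then S (e.erase α') else 0) ≠ 0 := by
        intro h; rw [h1, h, sub_self] at he; exact he rfl
      by_cases hm' : α' ∈ e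
      · rw [if_pos hm'] at h2; exact hcard α' hm' h2
      · rw [if_neg hm'] at h2; exact absurd rfl h2
    · by_cases hm' : α ∈ e
      · rw [if_pos hm'] at h1; exact hcard α hm' h1
      · rw [if_neg hm'] at h1; exact absurd rfl h1
  · -- membership
    obtain ⟨l, c, F, hF, hSrep⟩ := hmem
    have hπ : ∀ i, ∃ π : ℕ ≃ ℕ, F i = Pm π (cut {α} G) := by
      intro i
      obtain ⟨G₀, hG₀, hEq⟩ := hF i
      rw [Set.mem_singleton_iff] at hG₀
      subst hG₀
      exact eqs_elim hEq
    choose πs hπs using hπ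
    classical
    set big : Finset ℕ := ((verts S ∪ {α, α'}) ∪
      Finset.univ.biUnion fun i => (verts G).image (πs i)) with hbig
    obtain ⟨β, hβ⟩ := Infinite.exists_notMem_finset big
    obtain ⟨β', hβ'⟩ := Infinite.exists_notMem_finset (insert β big)
    have hβ'big : β' ∉ big := fun h => hβ' (Finset.mem_insert_of_mem h)
    have hββ' : β ≠ β' := fun h => hβ' (h ▸ Finset.mem_insert_self β big)
    have hfacts : ∀ x, x ∉ big →
        x ∉ verts S ∧ x ≠ α ∧ x ≠ α' ∧ ∀ i, ∀ y ∈ verts G, πs i y ≠ x := by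
      intro x hx
      refine ⟨?_, ?_, ?_, ?_⟩
      · intro h; exact hx (Finset.mem_union_left _ (Finset.mem_union_left _ h))
      · rintro rfl; exact hx (Finset.mem_union_left _ (Finset.mem_union_right _ (by simp)))
      · rintro rfl; exact hx (Finset.mem_union_left _ (Finset.mem_union_right _ (by simp)))
      · intro i y hy h
        apply hx
        refine Finset.mem_union_right _ (Finset.mem_biUnion.2 ⟨i, Finset.mem_univ i, ?_⟩)
        exact h ▸ Finset.mem_image_of_mem _ hy
    obtain ⟨hβS, hβα, hβα', hβG⟩ := hfacts β hβ
    obtain ⟨hβ'S, hβ'α, hβ'α', hβ'G⟩ := hfacts β' hβ'big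
    have hαbig : α ∈ big := Finset.mem_union_left _ (Finset.mem_union_right _ (by simp))
    have hα'big : α' ∈ big := Finset.mem_union_left _ (Finset.mem_union_right _ (by simp))
    have hE : enrich {β} S - enrich {β'} S
        = ∑ i, c i • (Pm ((πs i).trans (Equiv.swap (πs i α) β)) G
            - Pm ((πs i).trans (Equiv.swap (πs i α) β')) G) := by
      rw [enrich_eq, enrich_eq, hSrep, map_sum, map_sum, ← Finset.sum_sub_distrib]
      apply Finset.sum_congr rfl
      intro i _
      rw [map_smul, map_smul]
      have hd2 : (Em β) (F i) - (Em β') (F i)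
          = Pm ((πs i).trans (Equiv.swap ((πs i) α) β)) G
            - Pm ((πs i).trans (Equiv.swap ((πs i) α) β')) G := by
        rw [hπs i, ← enrich_eq, ← enrich_eq]
        exact enrich_diff G α (πs i) β β' (fun x hx => hβG i x hx) (fun x hx => hβ'G i x hx)
      rw [← hd2, smul_sub]
    set ρ : ℕ ≃ ℕ := (Equiv.swap α β).trans (Equiv.swap α' β') with hρdef
    have hρβ : ρ β = α := by
      show Equiv.swap α' β' (Equiv.swap α β β) = α
      rw [Equiv.swap_apply_right]
      exact Equiv.swap_apply_of_ne_of_ne hne (fun h => hβ'α h.symm)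
    have hρβ' : ρ β' = α' := by
      show Equiv.swap α' β' (Equiv.swap α β β') = α'
      rw [Equiv.swap_apply_of_ne_of_ne hβ'α (fun h => hββ' h.symm)]
      exact Equiv.swap_apply_right _ _
    have hρfix : ∀ x ∈ verts S, ρ x = x := by
      intro x hx
      show Equiv.swap α' β' (Equiv.swap α β x) = x
      rw [Equiv.swap_apply_of_ne_of_ne (ne_of_mem_of_not_mem hx hα)
        (ne_of_mem_of_not_mem hx hβS)]
      exact Equiv.swap_apply_of_ne_of_ne (ne_of_mem_of_not_mem hx hα')
        (ne_of_mem_of_not_mem hx hβ'S)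
    have key2 : ∀ (u v : ℕ), ρ v = u → Pm ρ (enrich {v} S) = enrich {u} S := by
      intro u v hv
      unfold enrich
      rw [map_sum]
      apply Finset.sum_congr rfl
      intro e he
      rw [Pm_single]
      congr 1
      rw [Finset.image_union, Finset.image_singleton, hv]
      congr 1
      rw [Finset.image_congr (g := id) (fun x hx => hρfix x (subset_verts he hx)),
        Finset.image_id]
    have hρD : enrich {α} S - enrich {α'} S = Pm ρ (enrich {β} S - enrich {β'} S) := by
      rw [map_sub, key2 α β hρβ, key2 α' β' hρβ']
    rw [zsum_iff, hρD, hE, map_sum]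
    apply Submodule.sum_mem
    intro i _
    rw [map_smul, map_sub, Pm_comp, Pm_comp]
    exact Submodule.smul_mem _ _ (Submodule.sub_mem _
      (Submodule.subset_span (eqs_intro _ G)) (Submodule.subset_span (eqs_intro _ G)))
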